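/- arXiv:2604.24904 — 4 statements merged into one kernel-verified Lean document; each statement's English description precedes it below -/
import Mathlib

section
/- Let C₀, C̄₀, and C^{RD} be as above. If (A₀, A₁, b) lies in the Euclidean closure of C₀ and rank(A₀) = d₀, then (A₀, A₁, b) ∈ C̄₀; that is, for all y ∈ ℝᵖ, min(min_{1≤j≤d₁} aⱼ'M₀y, −b'M₀y) ≤ 0, where aⱼ denote the columns of M₀A₁ (equivalently M₀ applied to the columns of A₁). -/
/-!
If some `y` violated the inequality, `z = M₀ y` would be a strict Farkas certificate:
`A₀ᵀ z = 0`, `A₁ᵀ z > 0` componentwise and `b ⬝ z < 0`, which rules out solutions of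
`A₀ x₀ + A₁ x₁ = b` with `x₁ ≥ 0`. When `A₀` has full column rank, `M₀` is the residual maker
`I - A₀ (A₀ᵀ A₀)⁻¹ A₀ᵀ`, which depends continuously on `A₀`; so every system close to
`(A₀, A₁, b)` carries the certificate `(I - A (AᵀA)⁻¹ Aᵀ) y` as well, and a whole neighbourhood
of `(A₀, A₁, b)` misses `C₀`.
-/

open Matrix

/-- `M` is the annihilator of `A`: the orthogonal projection of `ℝᵖ` onto the orthogonal
complement of the column space of `A`. -/
def IsAnnihilator {p d : ℕ} (A : Matrix (Fin p) (Fin d) ℝ)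
    (M : Matrix (Fin p) (Fin p) ℝ) : Prop :=
  Mᵀ = M ∧ M * M = M ∧ ∀ v : Fin p → ℝ, M *ᵥ v = 0 ↔ ∃ x : Fin d → ℝ, A *ᵥ x = v

open Filter Topology

section

variable {m n : Type*} [Fintype m] [Fintype n]

theorem Matrix.isUnit_transpose_mul_self_of_rank_eq [DecidableEq n] {A : Matrix m n ℝ}
    (h : A.rank = Fintype.card n) : IsUnit (Aᵀ * A) := by
  rw [← mulVec_surjective_iff_isUnit]
  change Function.Surjective (Aᵀ * A).mulVecLin
  rw [← LinearMap.range_eq_top]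
  apply Submodule.eq_top_of_finrank_eq
  rw [Module.finrank_fintype_fun_eq_card, ← h, ← rank_transpose_mul_self]
  rfl

theorem Matrix.mul_eq_left_of_ker_le {R : Type*} [CommRing R] {M N : Matrix m m R}
    (hN : N * N = N) (hker : ∀ v, N *ᵥ v = 0 → M *ᵥ v = 0) : M * N = M := by
  rw [ext_iff_mulVec]
  intro v
  have hv : N *ᵥ (v - N *ᵥ v) = 0 := by rw [mulVec_sub, mulVec_mulVec, hN, sub_self]
  rw [← mulVec_mulVec, eq_comm, ← sub_eq_zero, ← mulVec_sub]
  exact hker _ hv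

theorem dotProduct_mulVec_add_mulVec_nonneg {n₁ : Type*} [Fintype n₁] {A₀ : Matrix m n ℝ}
    {A₁ : Matrix m n₁ ℝ} {z : m → ℝ} (h₀ : A₀ᵀ *ᵥ z = 0) (h₁ : 0 ≤ A₁ᵀ *ᵥ z) (x₀ : n → ℝ)
    {x₁ : n₁ → ℝ} (hx₁ : 0 ≤ x₁) : 0 ≤ (A₀ *ᵥ x₀ + A₁ *ᵥ x₁) ⬝ᵥ z := by
  rw [add_dotProduct, dotProduct_comm, dotProduct_comm (A₁ *ᵥ x₁), dotProduct_mulVec,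
    dotProduct_mulVec, ← mulVec_transpose, ← mulVec_transpose, h₀, zero_dotProduct, zero_add]
  exact dotProduct_nonneg_of_nonneg h₁ hx₁

end

section ResidualMaker

variable {m n : Type*} [Fintype m] [Fintype n] [DecidableEq m] [DecidableEq n]

noncomputable def residualMaker (A : Matrix m n ℝ) : Matrix m m ℝ :=
  1 - A * (Aᵀ * A)⁻¹ * Aᵀ

variable {A : Matrix m n ℝ}

theorem transpose_residualMaker : (residualMaker A)ᵀ = residualMaker A := by
  simp [residualMaker, transpose_nonsing_inv, Matrix.mul_assoc]

theorem residualMaker_mul (h : IsUnit (Aᵀ * A).det) : residualMaker A * A = 0 := by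
  simp only [residualMaker, Matrix.sub_mul, Matrix.one_mul, Matrix.mul_assoc]
  rw [nonsing_inv_mul _ h, Matrix.mul_one, sub_self]

theorem transpose_mul_residualMaker (h : IsUnit (Aᵀ * A).det) : Aᵀ * residualMaker A = 0 := by
  rw [residualMaker, Matrix.mul_sub, Matrix.mul_one, ← Matrix.mul_assoc, ← Matrix.mul_assoc,
    mul_nonsing_inv _ h, Matrix.one_mul, sub_self]

theorem residualMaker_mul_self (h : IsUnit (Aᵀ * A).det) :
    residualMaker A * residualMaker A = residualMaker A := by
  nth_rw 1 [residualMaker]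
  rw [Matrix.sub_mul, Matrix.one_mul, Matrix.mul_assoc (A * _), transpose_mul_residualMaker h,
    Matrix.mul_zero, sub_zero]

theorem residualMaker_mulVec_eq_zero_iff (h : IsUnit (Aᵀ * A).det) (v : m → ℝ) :
    residualMaker A *ᵥ v = 0 ↔ ∃ x, A *ᵥ x = v := by
  constructor
  · intro hv
    refine ⟨((Aᵀ * A)⁻¹ * Aᵀ) *ᵥ v, ?_⟩
    rw [residualMaker, sub_mulVec, one_mulVec, sub_eq_zero] at hv
    rw [mulVec_mulVec, ← Matrix.mul_assoc, ← hv]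
  · rintro ⟨x, rfl⟩
    rw [mulVec_mulVec, residualMaker_mul h, zero_mulVec]

theorem continuousAt_residualMaker (h : IsUnit (Aᵀ * A).det) :
    ContinuousAt residualMaker A := by
  have hinv : ContinuousAt (fun B : Matrix m n ℝ => (Bᵀ * B)⁻¹) A := by
    refine (continuousAt_matrix_inv _ ?_).comp (by fun_prop)
    rw [Ring.inverse_eq_inv']
    exact continuousAt_inv₀ h.ne_zero
  unfold residualMaker
  fun_prop

end ResidualMaker

section IsAnnihilator

variable {p d : ℕ} {A : Matrix (Fin p) (Fin d) ℝ} {M : Matrix (Fin p) (Fin p) ℝ}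

theorem IsAnnihilator.unique {N : Matrix (Fin p) (Fin p) ℝ} (hM : IsAnnihilator A M)
    (hN : IsAnnihilator A N) : M = N := by
  obtain ⟨hMt, hMM, hMker⟩ := hM
  obtain ⟨hNt, hNN, hNker⟩ := hN
  have hMN : M * N = M := mul_eq_left_of_ker_le hNN fun v hv => (hMker v).2 ((hNker v).1 hv)
  have hNM : N * M = N := mul_eq_left_of_ker_le hMM fun v hv => (hNker v).2 ((hMker v).1 hv)
  calc M = (M * N)ᵀ := by rw [hMN, hMt]
    _ = N := by rw [transpose_mul, hMt, hNt, hNM]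

theorem IsAnnihilator.transpose_mul_mulVec_self {k : ℕ} (hM : IsAnnihilator A M)
    (B : Matrix (Fin p) (Fin k) ℝ) (y : Fin p → ℝ) :
    (M * B)ᵀ *ᵥ (M *ᵥ y) = Bᵀ *ᵥ (M *ᵥ y) := by
  rw [transpose_mul, hM.1, ← mulVec_mulVec, mulVec_mulVec _ M, hM.2.1]

theorem isAnnihilator_residualMaker (h : IsUnit (Aᵀ * A).det) :
    IsAnnihilator A (residualMaker A) :=
  ⟨transpose_residualMaker, residualMaker_mul_self h, residualMaker_mulVec_eq_zero_iff h⟩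

end IsAnnihilator

/-- The set `C₀` of the paper. -/
def feasibleSet (m n₀ n₁ : Type*) [Fintype n₀] [Fintype n₁] :
    Set (Matrix m n₀ ℝ × Matrix m n₁ ℝ × (m → ℝ)) :=
  {T | ∃ (x₀ : n₀ → ℝ) (x₁ : n₁ → ℝ), 0 ≤ x₁ ∧ T.1 *ᵥ x₀ + T.2.1 *ᵥ x₁ = T.2.2}

section Feasibility

variable {m n₀ n₁ : Type*} [Fintype m] [Fintype n₀] [Fintype n₁] [DecidableEq m] [DecidableEq n₀]

theorem eventually_residualMaker_certificate {A₀ : Matrix m n₀ ℝ} {A₁ : Matrix m n₁ ℝ}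
    {b y : m → ℝ} (hdet : IsUnit (A₀ᵀ * A₀).det)
    (hcols : ∀ j, 0 < (A₁ᵀ *ᵥ (residualMaker A₀ *ᵥ y)) j)
    (hb : b ⬝ᵥ (residualMaker A₀ *ᵥ y) < 0) :
    ∀ᶠ T in 𝓝 (A₀, A₁, b), IsUnit (T.1ᵀ * T.1).det ∧
      (∀ j, 0 < (T.2.1ᵀ *ᵥ (residualMaker T.1 *ᵥ y)) j) ∧
      T.2.2 ⬝ᵥ (residualMaker T.1 *ᵥ y) < 0 := by
  have hz : Tendsto (fun T : _ × _ × (m → ℝ) => residualMaker T.1 *ᵥ y) (𝓝 (A₀, A₁, b))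
      (𝓝 (residualMaker A₀ *ᵥ y)) :=
    ((continuous_id.matrix_mulVec continuous_const).tendsto _).comp
      ((continuousAt_residualMaker hdet).tendsto.comp continuousAt_fst)
  have hcolsT := ((continuous_fst.matrix_mulVec continuous_snd).tendsto _).comp
    ((continuous_snd.fst.matrix_transpose.tendsto (A₀, A₁, b)).prodMk_nhds hz)
  have hbT := ((continuous_fst.dotProduct continuous_snd).tendsto _).comp
    ((continuous_snd.snd.tendsto (A₀, A₁, b)).prodMk_nhds hz)
  refine .and ?_ (.and ?_ ?_)
  · exact ((continuous_fst.matrix_transpose.matrix_mul continuous_fst).matrix_det.continuousAt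
      |>.eventually_ne hdet.ne_zero).mono fun _ h => h.isUnit
  · exact eventually_all.2 fun j => (tendsto_pi_nhds.1 hcolsT j).eventually
      (eventually_gt_nhds (hcols j))
  · exact hbT.eventually (eventually_lt_nhds hb)

theorem notMem_closure_feasibleSet_of_certificate {A₀ : Matrix m n₀ ℝ} {A₁ : Matrix m n₁ ℝ}
    {b y : m → ℝ} (hdet : IsUnit (A₀ᵀ * A₀).det)
    (hcols : ∀ j, 0 < (A₁ᵀ *ᵥ (residualMaker A₀ *ᵥ y)) j)
    (hb : b ⬝ᵥ (residualMaker A₀ *ᵥ y) < 0) :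
    (A₀, A₁, b) ∉ closure (feasibleSet m n₀ n₁) := by
  intro hmem
  obtain ⟨T, ⟨hTdet, hTcols, hTb⟩, x₀, x₁, hx₁, hsol⟩ := mem_closure_iff_nhds.mp hmem _
    (eventually_residualMaker_certificate hdet hcols hb)
  have hT₀ : T.1ᵀ *ᵥ (residualMaker T.1 *ᵥ y) = 0 := by
    rw [mulVec_mulVec, transpose_mul_residualMaker hTdet, zero_mulVec]
  have hnonneg := dotProduct_mulVec_add_mulVec_nonneg hT₀ (fun j => (hTcols j).le) x₀ hx₁
  rw [hsol] at hnonneg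
  exact hnonneg.not_gt hTb

end Feasibility

theorem mem_closure_C0_full_rank_general {p d₀ d₁ : ℕ}
    (A₀ : Matrix (Fin p) (Fin d₀) ℝ) (A₁ : Matrix (Fin p) (Fin d₁) ℝ) (b : Fin p → ℝ)
    (M₀ : Matrix (Fin p) (Fin p) ℝ) (hM₀ : IsAnnihilator A₀ M₀)
    (hmem : (A₀, A₁, b) ∈
      closure {T : Matrix (Fin p) (Fin d₀) ℝ × Matrix (Fin p) (Fin d₁) ℝ × (Fin p → ℝ) |
        ∃ (x₀ : Fin d₀ → ℝ) (x₁ : Fin d₁ → ℝ), 0 ≤ x₁ ∧ T.1 *ᵥ x₀ + T.2.1 *ᵥ x₁ = T.2.2})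
    (hrank : A₀.rank = d₀) :
    ∀ y : Fin p → ℝ,
      min (⨅ j : Fin d₁, ((M₀ * A₁)ᵀ j) ⬝ᵥ (M₀ *ᵥ y)) (-(b ⬝ᵥ (M₀ *ᵥ y))) ≤ 0 := by
  intro y
  by_contra! hy
  obtain ⟨hcols, hb⟩ := lt_min_iff.mp hy
  have hdet : IsUnit (A₀ᵀ * A₀).det := (isUnit_iff_isUnit_det _).mp
    (isUnit_transpose_mul_self_of_rank_eq (by simpa using hrank))
  have hR : residualMaker A₀ = M₀ := (isAnnihilator_residualMaker hdet).unique hM₀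
  refine notMem_closure_feasibleSet_of_certificate (y := y) hdet (fun j => ?_)
    (by rw [hR]; linarith) hmem
  rw [hR, ← hM₀.transpose_mul_mulVec_self]
  exact (ciInf_le (Finite.bddBelow_range _) j).trans_lt' hcols

/-- if `(A₀, A₁, b)` lies in the Euclidean closure of `C₀` and `rank A₀ = d₀`,
then for all `y`, `min (min_j aⱼ' M₀ y, −b' M₀ y) ≤ 0`, where `aⱼ` are the columns of
`M₀ A₁`. -/
theorem mem_closure_C0_full_rank {p d₀ d₁ : ℕ} (hd₁ : 0 < d₁)
    (A₀ : Matrix (Fin p) (Fin d₀) ℝ) (A₁ : Matrix (Fin p) (Fin d₁) ℝ) (b : Fin p → ℝ)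
    (M₀ : Matrix (Fin p) (Fin p) ℝ) (hM₀ : IsAnnihilator A₀ M₀)
    (hmem : (A₀, A₁, b) ∈
      closure {T : Matrix (Fin p) (Fin d₀) ℝ × Matrix (Fin p) (Fin d₁) ℝ × (Fin p → ℝ) |
        ∃ (x₀ : Fin d₀ → ℝ) (x₁ : Fin d₁ → ℝ), 0 ≤ x₁ ∧ T.1 *ᵥ x₀ + T.2.1 *ᵥ x₁ = T.2.2})
    (hrank : A₀.rank = d₀) :
    ∀ y : Fin p → ℝ,
      min (⨅ j : Fin d₁, ((M₀ * A₁)ᵀ j) ⬝ᵥ (M₀ *ᵥ y)) (-(b ⬝ᵥ (M₀ *ᵥ y))) ≤ 0 :=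
  mem_closure_C0_full_rank_general A₀ A₁ b M₀ hM₀ hmem hrank
end

section
/- Let C^{RD} = {(A₀, A₁, b) ∈ ℝ^{p×d₀}×ℝ^{p×d₁}×ℝᵖ : rank(A₀) < d₀} and C₀ = {(A₀, A₁, b) : A₀x₀ + A₁x₁ = b for some x₀ ∈ ℝ^{d₀}, x₁ ∈ ℝ^{d₁} with x₁ ≥ 0}. Then C^{RD} is contained in the Euclidean closure of C₀; i.e., any triple whose first matrix is rank-deficient can be approximated arbitrarily well by triples admitting a feasible solution. -/
/-!
If `A₀ c = 0` with `c j ≠ 0`, adding `ε b` to the `j`-th column of `A₀` gives a matrix that maps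
`c / (ε c j)` to `b`. Letting `ε → 0` approximates `(A₀, A₁, b)` by triples that are feasible with
`x₁ = 0`.
-/

open Matrix Filter Topology

namespace Matrix

variable {m n K : Type*} [Fintype n] [Field K]

theorem exists_mulVec_eq_zero_of_rank_lt {A : Matrix m n K} (h : A.rank < Fintype.card n) :
    ∃ c ≠ 0, A *ᵥ c = 0 := by
  contrapose! h
  have hinj : Function.Injective A.mulVecLin :=
    LinearMap.ker_eq_bot.mp (ker_mulVecLin_eq_bot_iff.mpr fun c hc => not_imp_not.mp (h c) hc)
  rw [rank, LinearMap.finrank_range_of_inj hinj, Module.finrank_fintype_fun_eq_card]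

theorem add_smul_vecMulVec_single_mulVec [DecidableEq n] {A : Matrix m n K} {c : n → K}
    (hc : A *ᵥ c = 0) (b : m → K) {j : n} {ε : K} (hε : ε * c j ≠ 0) :
    (A + ε • vecMulVec b (Pi.single j 1)) *ᵥ ((ε * c j)⁻¹ • c) = b := by
  rw [mulVec_smul, add_mulVec, hc, zero_add, smul_mulVec, vecMulVec_mulVec, single_dotProduct,
    one_mul, op_smul_eq_smul, smul_smul, smul_smul, mul_assoc, inv_mul_cancel₀ hε, one_smul]

theorem mem_closure_setOf_exists_mulVec_eq_of_rank_lt {𝕜 : Type*} [NontriviallyNormedField 𝕜]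
    {A : Matrix m n 𝕜} (hA : A.rank < Fintype.card n) (b : m → 𝕜) :
    A ∈ closure {A' : Matrix m n 𝕜 | ∃ x, A' *ᵥ x = b} := by
  classical
  obtain ⟨c, hc0, hc⟩ := exists_mulVec_eq_zero_of_rank_lt hA
  obtain ⟨j, hj⟩ := Function.ne_iff.mp hc0
  set M := vecMulVec b (Pi.single j (1 : 𝕜))
  have hlim : Tendsto (fun ε : 𝕜 => A + ε • M) (𝓝[≠] 0) (𝓝 A) := by
    have hcont : Continuous fun ε : 𝕜 => A + ε • M := by fun_prop
    simpa using (hcont.tendsto 0).mono_left nhdsWithin_le_nhds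
  refine mem_closure_of_tendsto hlim (eventually_nhdsWithin_of_forall fun ε hε => ?_)
  exact ⟨_, add_smul_vecMulVec_single_mulVec hc b (mul_ne_zero hε hj)⟩

end Matrix

/-- the set of triples with rank-deficient `A₀` is contained in the Euclidean
closure of the feasible set `C₀`. -/
theorem rankDeficient_subset_closure_C0 {p d₀ d₁ : ℕ} :
    {T : Matrix (Fin p) (Fin d₀) ℝ × Matrix (Fin p) (Fin d₁) ℝ × (Fin p → ℝ) |
        T.1.rank < d₀} ⊆
      closure {T : Matrix (Fin p) (Fin d₀) ℝ × Matrix (Fin p) (Fin d₁) ℝ × (Fin p → ℝ) |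
        ∃ (x₀ : Fin d₀ → ℝ) (x₁ : Fin d₁ → ℝ), 0 ≤ x₁ ∧ T.1 *ᵥ x₀ + T.2.1 *ᵥ x₁ = T.2.2} := by
  rintro ⟨A₀, A₁, b⟩ hA₀
  have hrank : A₀.rank < Fintype.card (Fin d₀) := by simpa using hA₀
  refine map_mem_closure (f := fun A => (A, A₁, b)) (by fun_prop)
    (mem_closure_setOf_exists_mulVec_eq_of_rank_lt hrank b) ?_
  rintro A ⟨x₀, hx₀⟩
  exact ⟨x₀, 0, le_rfl, by simpa using hx₀⟩
end

section
/- Let A₀ ∈ ℝ^{p×d₀}, A₁ ∈ ℝ^{p×d₁}, b ∈ ℝᵖ, M₀ the annihilator of A₀, and suppose the cone {M₀A₁x₁ : x₁ ≥ 0} is NOT pointed. Then (A₀, A₁, b) lies in the Euclidean closure of C₀ = {(A₀, A₁, b) : A₀x₀ + A₁x₁ = b for some x₀, x₁ ≥ 0}. -/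
/-!
A non-pointed cone `{M₀ A₁ x : x ≥ 0}` yields `l > 0` with `M₀ A₁ l = 0`; pick `j` with `l j > 0`.
Adding `ε (M₀ b) e_jᵀ` to `A₁` makes the system feasible for every `ε > 0`: with `x₁ = t l`,
`t = 1 / (ε l_j)`, the residual `b - M₀ b - t A₁ l` is killed by the idempotent `M₀`, so it lies
in the column space of `A₀`. Letting `ε → 0` puts `(A₀, A₁, b)` in the closure.
-/

open Matrix

theorem Matrix.exists_pos_mulVec_eq_zero_of_not_pointed {R m n : Type*} [Fintype n]
    [Ring R] [PartialOrder R] [IsOrderedAddMonoid R] {B : Matrix m n R}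
    (h : ¬ ({v | ∃ x, 0 ≤ x ∧ B *ᵥ x = v} ∩ -{v | ∃ x, 0 ≤ x ∧ B *ᵥ x = v} = {0})) :
    ∃ l : n → R, 0 < l ∧ B *ᵥ l = 0 := by
  set S := {v | ∃ x, 0 ≤ x ∧ B *ᵥ x = v}
  have hzero : (0 : m → R) ∈ S := ⟨0, le_rfl, mulVec_zero B⟩
  obtain ⟨v, ⟨⟨x, hx, rfl⟩, ⟨y, hy, hyx⟩⟩, hv⟩ : ∃ v ∈ S ∩ -S, v ≠ 0 := by
    by_contra! hS
    exact h (Set.eq_singleton_iff_unique_mem.mpr ⟨⟨hzero, by simpa using hzero⟩, hS⟩)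
  refine ⟨x + y, lt_of_le_of_ne (add_nonneg hx hy) fun hxy => hv ?_, ?_⟩
  · rw [((add_eq_zero_iff_of_nonneg hx hy).mp hxy.symm).1, mulVec_zero]
  · rw [mulVec_add, hyx, add_neg_cancel]

theorem mem_closure_of_forall_pos_add_smul {E : Type*} [AddCommGroup E] [Module ℝ E]
    [TopologicalSpace E] [ContinuousAdd E] [ContinuousSMul ℝ E] {s : Set E} {x d : E}
    (h : ∀ ε : ℝ, 0 < ε → x + ε • d ∈ s) : x ∈ closure s := by
  have hcont : Continuous fun ε : ℝ => x + ε • d := by fun_prop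
  exact mem_closure_of_tendsto ((hcont.tendsto' 0 x (by simp)).mono_left nhdsWithin_le_nhds)
    (eventually_nhdsWithin_of_forall (s := Set.Ioi 0) h)

theorem IsAnnihilator.exists_feasible_add_smul_vecMulVec {p d₀ d₁ : ℕ}
    {A₀ : Matrix (Fin p) (Fin d₀) ℝ} {M₀ : Matrix (Fin p) (Fin p) ℝ} (hM₀ : IsAnnihilator A₀ M₀)
    (A₁ : Matrix (Fin p) (Fin d₁) ℝ) (b : Fin p → ℝ) {l : Fin d₁ → ℝ} (hl : 0 ≤ l)
    (hker : (M₀ * A₁) *ᵥ l = 0) {j : Fin d₁} (hj : 0 < l j) {ε : ℝ} (hε : 0 < ε) :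
    ∃ (x₀ : Fin d₀ → ℝ) (x₁ : Fin d₁ → ℝ), 0 ≤ x₁ ∧
      A₀ *ᵥ x₀ + (A₁ + ε • vecMulVec (M₀ *ᵥ b) (Pi.single j 1)) *ᵥ x₁ = b := by
  set u := M₀ *ᵥ b
  set t := (ε * l j)⁻¹
  have hscale : ε * (t * l j) = 1 := by
    rw [← mul_assoc, mul_comm ε, mul_assoc, mul_comm t]
    exact mul_inv_cancel₀ (by positivity)
  have hrange : M₀ *ᵥ (b - u - t • (A₁ *ᵥ l)) = 0 := by
    rw [mulVec_sub, mulVec_sub, mulVec_smul, mulVec_mulVec, mulVec_mulVec, hM₀.2.1, hker,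
      smul_zero, sub_self, sub_zero]
  obtain ⟨x₀, hx₀⟩ := (hM₀.2.2 _).mp hrange
  refine ⟨x₀, t • l, smul_nonneg (by positivity) hl, ?_⟩
  have hdir : vecMulVec u (Pi.single j 1) *ᵥ (t • l) = (t * l j) • u := by
    rw [vecMulVec_mulVec, op_smul_eq_smul, single_one_dotProduct, Pi.smul_apply, smul_eq_mul]
  rw [hx₀, add_mulVec, smul_mulVec, hdir, mulVec_smul, smul_smul, hscale, one_smul]
  abel

/-- if the cone `{M₀ A₁ x₁ : x₁ ≥ 0}` is not pointed, then `(A₀, A₁, b)` lies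
in the Euclidean closure of the feasible set `C₀`. -/
theorem mem_closure_C0_of_not_pointed {p d₀ d₁ : ℕ}
    (A₀ : Matrix (Fin p) (Fin d₀) ℝ) (A₁ : Matrix (Fin p) (Fin d₁) ℝ) (b : Fin p → ℝ)
    (M₀ : Matrix (Fin p) (Fin p) ℝ) (hM₀ : IsAnnihilator A₀ M₀)
    (hnotpointed : ¬ ({v : Fin p → ℝ | ∃ x₁ : Fin d₁ → ℝ, 0 ≤ x₁ ∧ (M₀ * A₁) *ᵥ x₁ = v} ∩
        (-{v : Fin p → ℝ | ∃ x₁ : Fin d₁ → ℝ, 0 ≤ x₁ ∧ (M₀ * A₁) *ᵥ x₁ = v}) = {0})) :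
    (A₀, A₁, b) ∈
      closure {T : Matrix (Fin p) (Fin d₀) ℝ × Matrix (Fin p) (Fin d₁) ℝ × (Fin p → ℝ) |
        ∃ (x₀ : Fin d₀ → ℝ) (x₁ : Fin d₁ → ℝ), 0 ≤ x₁ ∧ T.1 *ᵥ x₀ + T.2.1 *ᵥ x₁ = T.2.2} := by
  obtain ⟨l, hl, hker⟩ := exists_pos_mulVec_eq_zero_of_not_pointed hnotpointed
  obtain ⟨j, hj⟩ := (Pi.lt_def.mp hl).2
  refine mem_closure_of_forall_pos_add_smul
    (d := (0, vecMulVec (M₀ *ᵥ b) (Pi.single j 1), 0)) fun ε hε => ?_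
  simpa using hM₀.exists_feasible_add_smul_vecMulVec A₁ b hl.le hker hj hε
end

section
/- Let Σ be a k×k symmetric positive semi-definite real matrix and let μₙ → μ in ℝᵏ with μₙ − μ ∈ range(Σ) for all n. Then the total variation distance between the Gaussian measures N(μₙ, Σ) and N(μ, Σ) converges to 0 as n → ∞. -/
/-!
Since `Σ = B Bᵀ`, the range of `Σ` lies in that of `B`, so `μₙ - μ = B wₙ`, and `wₙ → 0` can be
arranged because a linear right inverse of `B` on its range is continuous. Then `N(μₙ, Σ)` and
`N(μ, Σ)` are the images under `x ↦ μ + B x` of `⊗ᵢ N(wₙᵢ, 1)` and `⊗ᵢ N(0, 1)`, and a pushforward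
does not increase the total variation distance. These product measures have densities on `ℝᵏ`
converging pointwise; all are probability densities, so by Scheffé's lemma they converge in `L¹`,
and the `L¹` distance of the densities bounds the total variation distance.
-/

open Matrix MeasureTheory ProbabilityTheory Filter

/-- Total variation distance between two measures: the supremum over measurable sets of the
absolute difference of the measures. -/
noncomputable def tvDist {α : Type*} [MeasurableSpace α] (P Q : Measure α) : ℝ :=
  ⨆ s : {s : Set α // MeasurableSet s}, |(P s).toReal - (Q s).toReal|

/-- The Gaussian measure `N(m, B Bᵀ)` on `ℝᵏ`, realized as the law of `m + B Z` where `Z` is a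
standard Gaussian vector. -/
noncomputable def gaussianPi {k : ℕ} (m : Fin k → ℝ) (B : Matrix (Fin k) (Fin k) ℝ) :
    Measure (Fin k → ℝ) :=
  Measure.map (fun x => m + B *ᵥ x) (Measure.pi fun _ => gaussianReal 0 1)

open scoped NNReal Topology

section TotalVariation

variable {α β : Type*} [MeasurableSpace α] [MeasurableSpace β] {P Q : Measure α}

lemma tvDist_nonneg : 0 ≤ tvDist P Q :=
  Real.iSup_nonneg fun _ => abs_nonneg _

lemma tvDist_le {b : ℝ} (h : ∀ s, MeasurableSet s → |(P s).toReal - (Q s).toReal| ≤ b) :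
    tvDist P Q ≤ b :=
  haveI : Nonempty {s : Set α // MeasurableSet s} := ⟨⟨∅, .empty⟩⟩
  ciSup_le fun s => h s.1 s.2

lemma abs_sub_le_tvDist [IsFiniteMeasure P] [IsFiniteMeasure Q] {s : Set α}
    (hs : MeasurableSet s) : |(P s).toReal - (Q s).toReal| ≤ tvDist P Q := by
  refine le_ciSup (f := fun s : {s : Set α // MeasurableSet s} =>
    |(P s).toReal - (Q s).toReal|) ⟨(P .univ).toReal + (Q .univ).toReal, ?_⟩ ⟨s, hs⟩
  rintro _ ⟨t, rfl⟩
  have hP := measureReal_mono (μ := P) (Set.subset_univ t.1)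
  have hQ := measureReal_mono (μ := Q) (Set.subset_univ t.1)
  have := measureReal_nonneg (μ := P) (s := t.1)
  have := measureReal_nonneg (μ := Q) (s := t.1)
  simp only [measureReal_def] at *
  exact abs_sub_le_iff.2 ⟨by linarith, by linarith⟩

lemma tvDist_map_le [IsFiniteMeasure P] [IsFiniteMeasure Q] {f : α → β} (hf : Measurable f) :
    tvDist (P.map f) (Q.map f) ≤ tvDist P Q :=
  tvDist_le fun s hs => by
    rw [Measure.map_apply hf hs, Measure.map_apply hf hs]
    exact abs_sub_le_tvDist (hf hs)

lemma tvDist_withDensity_ofReal_le {ν : Measure α} {f g : α → ℝ} (hf : Integrable f ν)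
    (hg : Integrable g ν) (hf₀ : 0 ≤ᵐ[ν] f) (hg₀ : 0 ≤ᵐ[ν] g) :
    tvDist (ν.withDensity fun x => .ofReal (f x)) (ν.withDensity fun x => .ofReal (g x)) ≤
      ∫ x, |f x - g x| ∂ν := by
  refine tvDist_le fun s hs => ?_
  rw [withDensity_apply _ hs, withDensity_apply _ hs,
    ← ofReal_integral_eq_lintegral_ofReal hf.integrableOn (ae_restrict_of_ae hf₀),
    ← ofReal_integral_eq_lintegral_ofReal hg.integrableOn (ae_restrict_of_ae hg₀),
    ENNReal.toReal_ofReal (setIntegral_nonneg_of_ae_restrict (ae_restrict_of_ae hf₀)),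
    ENNReal.toReal_ofReal (setIntegral_nonneg_of_ae_restrict (ae_restrict_of_ae hg₀)),
    ← integral_sub hf.integrableOn hg.integrableOn]
  calc |∫ x in s, f x - g x ∂ν| ≤ ∫ x in s, |f x - g x| ∂ν := abs_integral_le_integral_abs
    _ ≤ ∫ x, |f x - g x| ∂ν :=
      setIntegral_le_integral (hf.sub hg).abs (.of_forall fun _ => abs_nonneg _)

end TotalVariation

theorem tendsto_integral_abs_sub_of_tendsto_ae {α ι : Type*} [MeasurableSpace α]
    {μ : Measure α} {l : Filter ι} [l.IsCountablyGenerated] {F : ι → α → ℝ} {f : α → ℝ}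
    (hF₀ : ∀ i, 0 ≤ᵐ[μ] F i) (hF : ∀ i, Integrable (F i) μ) (hf : Integrable f μ)
    (h_int : ∀ i, ∫ x, F i x ∂μ = ∫ x, f x ∂μ)
    (h_lim : ∀ᵐ x ∂μ, Tendsto (fun i => F i x) l (𝓝 (f x))) :
    Tendsto (fun i => ∫ x, |F i x - f x| ∂μ) l (𝓝 0) := by
  -- `F i - f` has integral zero, so only its negative part counts, and that is dominated by `|f|`.
  have h_abs : ∀ i, ∫ x, |F i x - f x| ∂μ = 2 * ∫ x, max (f x - F i x) 0 ∂μ := by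
    intro i
    have h_pos : Integrable (fun x => max (f x - F i x) 0) μ := (hf.sub (hF i)).pos_part
    calc ∫ x, |F i x - f x| ∂μ = ∫ x, (F i x - f x) + 2 * max (f x - F i x) 0 ∂μ := by
          congr 1; ext x
          rcases le_total (F i x) (f x) with h | h
          · rw [abs_of_nonpos (by linarith), max_eq_left (by linarith)]; ring
          · rw [abs_of_nonneg (by linarith), max_eq_right (by linarith)]; ring
      _ = 2 * ∫ x, max (f x - F i x) 0 ∂μ := by
          rw [integral_add (f := fun x => F i x - f x) ((hF i).sub hf) (h_pos.const_mul 2),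
            integral_sub (hF i) hf, h_int, integral_const_mul, sub_self, zero_add]
  suffices h : Tendsto (fun i => ∫ x, max (f x - F i x) 0 ∂μ) l (𝓝 0) by
    simpa [h_abs] using h.const_mul 2
  have h_dom := tendsto_integral_filter_of_dominated_convergence (μ := μ) (l := l)
    (F := fun i x => max (f x - F i x) 0) (f := fun _ => 0) (fun x => |f x|)
    (.of_forall fun i => ((hf.sub (hF i)).pos_part).aestronglyMeasurable)
    (.of_forall fun i => (hF₀ i).mono fun x hx => by
      rw [Real.norm_of_nonneg (le_max_right _ _)]
      exact max_le (by linarith [le_abs_self (f x), show (0:ℝ) ≤ F i x from hx]) (abs_nonneg _))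
    hf.abs (h_lim.mono fun x hx => by
      simpa using ((tendsto_const_nhds (x := f x)).sub hx).max (tendsto_const_nhds (x := (0:ℝ))))
  simpa using h_dom

lemma MeasureTheory.Measure.pi_withDensity_ofReal {ι : Type*} [Fintype ι] {α : ι → Type*}
    [∀ i, MeasurableSpace (α i)] {ν : ∀ i, Measure (α i)} [∀ i, SigmaFinite (ν i)]
    {f : ∀ i, α i → ℝ} (hf : ∀ i, Integrable (f i) (ν i)) (hf₀ : ∀ i, 0 ≤ f i) :
    Measure.pi (fun i => (ν i).withDensity fun x => .ofReal (f i x)) =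
      (Measure.pi ν).withDensity fun x => .ofReal (∏ i, f i (x i)) := by
  have := fun i => isFiniteMeasure_withDensity_ofReal (hf i).2
  refine Measure.pi_eq fun s hs => ?_
  have hprod : Integrable (fun x => ∏ i, f i (x i)) (Measure.pi fun i => (ν i).restrict (s i)) :=
    .fintype_prod_dep fun i => (hf i).restrict
  rw [withDensity_apply _ (.univ_pi hs), Measure.restrict_pi_pi,
    ← ofReal_integral_eq_lintegral_ofReal hprod
      (.of_forall fun x => Finset.prod_nonneg fun i _ => hf₀ i (x i)),
    integral_fintype_prod_eq_prod, ENNReal.ofReal_prod_of_nonneg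
      fun i _ => setIntegral_nonneg (hs i) fun x _ => hf₀ i x]
  refine Finset.prod_congr rfl fun i _ => ?_
  rw [withDensity_apply _ (hs i),
    ofReal_integral_eq_lintegral_ofReal (hf i).restrict (.of_forall (hf₀ i))]

lemma pi_gaussianReal_eq_withDensity {ι : Type*} [Fintype ι] (m : ι → ℝ) {v : ℝ≥0} (hv : v ≠ 0) :
    Measure.pi (fun i => gaussianReal (m i) v) =
      volume.withDensity fun x => .ofReal (∏ i, gaussianPDFReal (m i) v (x i)) := by
  simp_rw [gaussianReal_of_var_ne_zero _ hv, gaussianPDF_def]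
  exact Measure.pi_withDensity_ofReal (fun i => integrable_gaussianPDFReal (m i) v)
    fun i => gaussianPDFReal_nonneg (m i) v

lemma integrable_prod_gaussianPDFReal {ι : Type*} [Fintype ι] (m : ι → ℝ) (v : ℝ≥0) :
    Integrable fun x : ι → ℝ => ∏ i, gaussianPDFReal (m i) v (x i) :=
  .fintype_prod_dep fun i => integrable_gaussianPDFReal (m i) v

lemma tendsto_integral_abs_sub_prod_gaussianPDFReal {ι β : Type*} [Fintype ι] {l : Filter β}
    [l.IsCountablyGenerated] {m : β → ι → ℝ} {m₀ : ι → ℝ} (hm : Tendsto m l (𝓝 m₀))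
    {v : ℝ≥0} (hv : v ≠ 0) :
    Tendsto (fun b => ∫ x : ι → ℝ, |∏ i, gaussianPDFReal (m b i) v (x i) -
      ∏ i, gaussianPDFReal (m₀ i) v (x i)|) l (𝓝 0) := by
  refine tendsto_integral_abs_sub_of_tendsto_ae
    (fun b => .of_forall fun x => Finset.prod_nonneg fun i _ => gaussianPDFReal_nonneg _ _ _)
    (fun b => integrable_prod_gaussianPDFReal (m b) v)
    (integrable_prod_gaussianPDFReal m₀ v) (fun b => ?_) (.of_forall fun x => ?_)
  · simp_rw [integral_fintype_prod_volume_eq_prod, integral_gaussianPDFReal_eq_one _ hv]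
  · refine tendsto_finsetProd _ fun i _ => ?_
    have hcont : Continuous fun a => gaussianPDFReal a v (x i) := by
      unfold gaussianPDFReal; fun_prop
    exact (hcont.tendsto _).comp ((continuous_apply i).tendsto m₀ |>.comp hm)

lemma tendsto_tvDist_pi_gaussianReal {ι β : Type*} [Fintype ι] {l : Filter β}
    [l.IsCountablyGenerated] {m : β → ι → ℝ} {m₀ : ι → ℝ} (hm : Tendsto m l (𝓝 m₀))
    {v : ℝ≥0} (hv : v ≠ 0) :
    Tendsto (fun b => tvDist (Measure.pi fun i => gaussianReal (m b i) v)
      (Measure.pi fun i => gaussianReal (m₀ i) v)) l (𝓝 0) := by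
  refine squeeze_zero (fun _ => tvDist_nonneg) (fun b => ?_)
    (tendsto_integral_abs_sub_prod_gaussianPDFReal hm hv)
  rw [pi_gaussianReal_eq_withDensity _ hv, pi_gaussianReal_eq_withDensity _ hv]
  exact tvDist_withDensity_ofReal_le (integrable_prod_gaussianPDFReal _ v)
    (integrable_prod_gaussianPDFReal _ v)
    (.of_forall fun x => Finset.prod_nonneg fun i _ => gaussianPDFReal_nonneg _ _ _)
    (.of_forall fun x => Finset.prod_nonneg fun i _ => gaussianPDFReal_nonneg _ _ _)

lemma pi_gaussianReal_map_add {ι : Type*} [Fintype ι] (m w : ι → ℝ) (v : ℝ≥0) :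
    (Measure.pi fun i => gaussianReal (m i) v).map (· + w) =
      Measure.pi fun i => gaussianReal (m i + w i) v := by
  simp_rw [← gaussianReal_map_add_const]
  exact Measure.pi_map_pi fun i => (measurable_add_const (w i)).aemeasurable

lemma gaussianPi_add_mulVec {k : ℕ} (m w : Fin k → ℝ) (B : Matrix (Fin k) (Fin k) ℝ) :
    gaussianPi (m + B *ᵥ w) B =
      (Measure.pi fun i => gaussianReal (w i) 1).map fun x => m + B *ᵥ x := by
  have h := pi_gaussianReal_map_add 0 w 1
  simp only [Pi.zero_apply, zero_add] at h
  rw [← h, Measure.map_map (by fun_prop) (by fun_prop), gaussianPi]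
  congr 1
  ext x : 1
  simp only [Function.comp_apply, mulVec_add, add_assoc, add_comm (B *ᵥ w)]

lemma LinearMap.exists_tendsto_zero_of_mem_range {𝕜 E F ι : Type*} [NontriviallyNormedField 𝕜]
    [CompleteSpace 𝕜] [AddCommGroup E] [Module 𝕜 E] [TopologicalSpace E] [IsTopologicalAddGroup E]
    [ContinuousSMul 𝕜 E] [NormedAddCommGroup F] [NormedSpace 𝕜 F] [FiniteDimensional 𝕜 F]
    (f : E →ₗ[𝕜] F) {l : Filter ι} {y : ι → F} (hy : Tendsto y l (𝓝 0))
    (hmem : ∀ i, y i ∈ LinearMap.range f) :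
    ∃ x : ι → E, Tendsto x l (𝓝 0) ∧ ∀ i, f (x i) = y i := by
  obtain ⟨g, hg⟩ := f.rangeRestrict.exists_rightInverse_of_surjective f.range_rangeRestrict
  refine ⟨fun i => g ⟨y i, hmem i⟩, ?_, fun i => congr_arg Subtype.val (LinearMap.congr_fun hg _)⟩
  have hy' : Tendsto (fun i => (⟨y i, hmem i⟩ : LinearMap.range f)) l (𝓝 0) :=
    tendsto_subtype_rng.2 hy
  simpa [Function.comp_def] using (g.continuous_of_finiteDimensional.tendsto 0).comp hy'

theorem gaussian_tv_tendsto_zero_general {k : ℕ}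
    (S B : Matrix (Fin k) (Fin k) ℝ) (hB : B * Bᵀ = S)
    (μseq : ℕ → (Fin k → ℝ)) (μ : Fin k → ℝ)
    (hconv : Tendsto μseq atTop (nhds μ))
    (hrange : ∀ n : ℕ, ∃ v : Fin k → ℝ, S *ᵥ v = μseq n - μ) :
    Tendsto (fun n => tvDist (gaussianPi (μseq n) B) (gaussianPi μ B)) atTop (nhds 0) := by
  have hmem : ∀ n, μseq n - μ ∈ LinearMap.range (mulVecLin B) := fun n => by
    obtain ⟨v, hv⟩ := hrange n
    exact ⟨Bᵀ *ᵥ v, by rw [mulVecLin_apply, mulVec_mulVec, hB, hv]⟩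
  obtain ⟨w, hw, hBw⟩ := (mulVecLin B).exists_tendsto_zero_of_mem_range
    (tendsto_sub_nhds_zero_iff.2 hconv) hmem
  have hlaw : ∀ n, gaussianPi (μseq n) B = gaussianPi (μ + B *ᵥ w n) B := fun n => by
    rw [← mulVecLin_apply, hBw, add_sub_cancel]
  have hlaw₀ : gaussianPi μ B = gaussianPi (μ + B *ᵥ 0) B := by rw [mulVec_zero, add_zero]
  refine squeeze_zero (fun _ => tvDist_nonneg) (fun n => ?_)
    (tendsto_tvDist_pi_gaussianReal hw one_ne_zero)
  rw [hlaw, hlaw₀, gaussianPi_add_mulVec, gaussianPi_add_mulVec]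
  exact tvDist_map_le (by fun_prop)

/-- if `Σ = B Bᵀ` is positive semi-definite, `μₙ → μ` and `μₙ − μ ∈ range Σ` for
all `n`, then the total variation distance between `N(μₙ, Σ)` and `N(μ, Σ)` tends to `0`. -/
theorem gaussian_tv_tendsto_zero {k : ℕ}
    (S B : Matrix (Fin k) (Fin k) ℝ) (hS : S.PosSemidef) (hB : B * Bᵀ = S)
    (μseq : ℕ → (Fin k → ℝ)) (μ : Fin k → ℝ)
    (hconv : Tendsto μseq atTop (nhds μ))
    (hrange : ∀ n : ℕ, ∃ v : Fin k → ℝ, S *ᵥ v = μseq n - μ) :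
    Tendsto (fun n => tvDist (gaussianPi (μseq n) B) (gaussianPi μ B)) atTop (nhds 0) :=
  gaussian_tv_tendsto_zero_general S B hB μseq μ hconv hrange
end
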